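/- arXiv:2212.02932 — 2 statements merged into one kernel-verified Lean document; each statement's English description precedes it below -/
import Mathlib

section
/- Let X be a nonempty compact topological space, d ≥ 1, and let f_1, …, f_d : X → ℝ be continuous. Then the intersection of the argmax sets of the f_k is nonempty if and only if sup_{x ∈ X} Σ_{k=1}^d f_k(x) = Σ_{k=1}^d (sup_{x ∈ X} f_k(x)). -/
/-!
Every `f k x` is at most `⨆ y, f k y`, so `∑ k, f k x ≤ ∑ k, ⨆ y, f k y`, with equality exactly
when `x` maximizes every `f k`. By compactness the sum attains its supremum at some `x₀`; the
two sides of the equation are equal iff `x₀` attains the bound, i.e. iff `x₀` is a common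
maximizer, and any common maximizer also maximizes the sum.
-/

section CommonMaximizer

variable {X ι : Type*} [Fintype ι] {f : ι → X → ℝ}

theorem sum_le_sum_ciSup (hf : ∀ k, BddAbove (Set.range (f k))) (x : X) :
    ∑ k, f k x ≤ ∑ k, ⨆ y, f k y :=
  Finset.sum_le_sum fun k _ => le_ciSup (hf k) x

theorem sum_eq_sum_ciSup_iff (hf : ∀ k, BddAbove (Set.range (f k))) (x : X) :
    ∑ k, f k x = ∑ k, ⨆ y, f k y ↔ ∀ k y, f k y ≤ f k x := by
  rw [Finset.sum_eq_sum_iff_of_le fun k _ => le_ciSup (hf k) x]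
  constructor
  · intro h k y
    exact (h k (Finset.mem_univ k)).symm ▸ le_ciSup (hf k) y
  · intro h k _
    have : Nonempty X := ⟨x⟩
    exact le_antisymm (le_ciSup (hf k) x) (ciSup_le (h k))

end CommonMaximizer

theorem inter_argmax_nonempty_iff_sup_sum_eq_sum_sup_general
    {X : Type*} [TopologicalSpace X] [CompactSpace X] [Nonempty X]
    (d : ℕ) (f : Fin d → X → ℝ) (hf : ∀ k : Fin d, Continuous (f k)) :
    (⋂ k : Fin d, {x : X | ∀ y : X, f k y ≤ f k x}).Nonempty ↔
      (⨆ x : X, ∑ k : Fin d, f k x) = ∑ k : Fin d, ⨆ x : X, f k x := by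
  have hbdd : ∀ k, BddAbove (Set.range (f k)) := fun k => (isCompact_range (hf k)).bddAbove
  obtain ⟨x₀, -, hx₀⟩ := isCompact_univ.exists_isMaxOn Set.univ_nonempty
    (continuous_finsetSum Finset.univ fun k _ => hf k).continuousOn
  rw [isMaxOn_univ_iff] at hx₀
  have hsup : (⨆ x, ∑ k, f k x) = ∑ k, f k x₀ :=
    ciSup_eq_of_forall_le_of_forall_lt_exists_gt hx₀ fun _ hw => ⟨x₀, hw⟩
  simp only [Set.Nonempty, Set.mem_iInter, Set.mem_ofPred_eq, ← sum_eq_sum_ciSup_iff hbdd, hsup]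
  constructor
  · rintro ⟨x, hx⟩
    exact le_antisymm (sum_le_sum_ciSup hbdd x₀) (hx ▸ hx₀ x)
  · exact fun h => ⟨x₀, h⟩

/-- Proposition 2 of the paper: On a nonempty compact space `X`, with
continuous `f_1, …, f_d : X → ℝ`, the intersection of the argmax sets of the `f k` is
nonempty iff `sup_x ∑ k, f k x = ∑ k, sup_x f k x`. -/
theorem inter_argmax_nonempty_iff_sup_sum_eq_sum_sup
    {X : Type*} [TopologicalSpace X] [CompactSpace X] [Nonempty X]
    (d : ℕ) (hd : 1 ≤ d) (f : Fin d → X → ℝ) (hf : ∀ k : Fin d, Continuous (f k)) :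
    (⋂ k : Fin d, {x : X | ∀ y : X, f k y ≤ f k x}).Nonempty ↔
      (⨆ x : X, ∑ k : Fin d, f k x) = ∑ k : Fin d, ⨆ x : X, f k x :=
  inter_argmax_nonempty_iff_sup_sum_eq_sum_sup_general d f hf
end

section
/- Let X be a nonempty compact topological space, d ≥ 1, and let f_1, …, f_d : X → ℝ be continuous. Then the intersection of the argmax sets of the f_k is empty if and only if sup_{x ∈ X} Σ_{k=1}^d f_k(x) < Σ_{k=1}^d (sup_{x ∈ X} f_k(x)), i.e., the global maximum of the sum is strictly smaller than the sum of the global maxima. -/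
/-!
The supremum of a sum never exceeds the sum of the suprema, and equality holds exactly when
some point maximizes every summand simultaneously: a common maximizer realizes the sum of the
suprema, and conversely at a maximizer of the sum (which exists by compactness) equality forces
each summand to attain its own supremum, since each term is bounded by it.
-/

open Set Finset

theorem ciSup_eq_apply_of_forall_le {X α : Type*} [ConditionallyCompleteLattice α]
    {g : X → α} {x : X} (hx : ∀ y, g y ≤ g x) : ⨆ y, g y = g x :=
  have : Nonempty X := ⟨x⟩
  le_antisymm (ciSup_le hx) (le_ciSup ⟨g x, forall_mem_range.2 hx⟩ x)

section FiniteSum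

variable {ι X : Type*} [Fintype ι] {f : ι → X → ℝ}

theorem iSup_sum_le_sum_iSup [Nonempty X] (hf : ∀ k, BddAbove (range (f k))) :
    ⨆ x, ∑ k, f k x ≤ ∑ k, ⨆ x, f k x :=
  ciSup_le fun x => sum_le_sum fun k _ => le_ciSup (hf k) x

theorem iSup_sum_eq_sum_iSup_of_forall_le {x : X} (hx : ∀ k y, f k y ≤ f k x) :
    ⨆ y, ∑ k, f k y = ∑ k, ⨆ y, f k y := by
  have hsum : ∀ y, ∑ k, f k y ≤ ∑ k, f k x := fun y => sum_le_sum fun k _ => hx k y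
  simp only [ciSup_eq_apply_of_forall_le hsum, ciSup_eq_apply_of_forall_le (hx _)]

theorem forall_le_of_sum_eq_sum_iSup (hf : ∀ k, BddAbove (range (f k))) {x : X}
    (hx : ∑ k, f k x = ∑ k, ⨆ y, f k y) (k : ι) (y : X) : f k y ≤ f k x := by
  have hle : ∀ j ∈ Finset.univ, f j x ≤ ⨆ y, f j y := fun j _ => le_ciSup (hf j) x
  rw [(sum_eq_sum_iff_of_le hle).1 hx k (Finset.mem_univ k)]
  exact le_ciSup (hf k) y

end FiniteSum

theorem inter_argmax_empty_iff_sup_sum_lt_sum_sup_general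
    {X : Type*} [TopologicalSpace X] [CompactSpace X] [Nonempty X]
    (d : ℕ) (f : Fin d → X → ℝ) (hf : ∀ k : Fin d, Continuous (f k)) :
    (⋂ k : Fin d, {x : X | ∀ y : X, f k y ≤ f k x}) = ∅ ↔
      (⨆ x : X, ∑ k : Fin d, f k x) < ∑ k : Fin d, ⨆ x : X, f k x := by
  have hbdd : ∀ k, BddAbove (range (f k)) := fun k => (isCompact_range (hf k)).bddAbove
  obtain ⟨x₀, hx₀⟩ : ∃ x₀, ∀ y, ∑ k, f k y ≤ ∑ k, f k x₀ :=
    (continuous_finsetSum _ fun k _ => hf k).exists_forall_ge (by simp) -- `cocompact X = ⊥`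
  simp only [Set.eq_empty_iff_forall_notMem, mem_iInter, mem_ofPred_eq]
  constructor
  · intro hnone
    refine (iSup_sum_le_sum_iSup hbdd).lt_of_ne fun heq => hnone x₀ ?_
    exact forall_le_of_sum_eq_sum_iSup hbdd (ciSup_eq_apply_of_forall_le hx₀ ▸ heq)
  · intro hlt x hx
    exact hlt.ne (iSup_sum_eq_sum_iSup_of_forall_le hx)

/-- Corollary 3 of the paper: On a nonempty compact space `X`, with
continuous `f_1, …, f_d : X → ℝ`, the intersection of the argmax sets of the `f k` is
empty iff `sup_x ∑ k, f k x < ∑ k, sup_x f k x`. -/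
theorem inter_argmax_empty_iff_sup_sum_lt_sum_sup
    {X : Type*} [TopologicalSpace X] [CompactSpace X] [Nonempty X]
    (d : ℕ) (hd : 1 ≤ d) (f : Fin d → X → ℝ) (hf : ∀ k : Fin d, Continuous (f k)) :
    (⋂ k : Fin d, {x : X | ∀ y : X, f k y ≤ f k x}) = ∅ ↔
      (⨆ x : X, ∑ k : Fin d, f k x) < ∑ k : Fin d, ⨆ x : X, f k x :=
  inter_argmax_empty_iff_sup_sum_lt_sum_sup_general d f hf
end
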